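/- arXiv:2307.16186 — 5 statements merged into one kernel-verified Lean document; each statement's English description precedes it below -/
import Mathlib

section
/- In a finite Symmetry Markov game, for any policy π, the value function of the transformed policy evaluated at the transformed state equals the original value: if the reward satisfies R(s,a) = R(L_g[s], K_g[a]) and the transition satisfies T(s,a,s') = T(L_g[s], K_g[a], L_g[s']) for all g in group G, then V^{π_g}(L_g[s]) = V^π(s), where π_g(K_g[a] | L_g[s]) = π(a | s). -/
open Finset

/-- Policy Bellman (evaluation) equation for value function `V` under stochastic policy `π`. -/
def IsPolicyValue {S A : Type*} [Fintype S] [Fintype A]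
    (R : S → A → ℝ) (T : S → A → S → ℝ) (γ : ℝ)
    (π : S → A → ℝ) (V : S → ℝ) : Prop :=
  ∀ s, V s = ∑ a, π s a * (R s a + γ * ∑ s', T s a s' * V s')

theorem value_of_transformed_policy {S A : Type*} [Fintype S] [Fintype A]
    (R : S → A → ℝ) (T : S → A → S → ℝ) (γ : ℝ) (hγ : 0 ≤ γ) (hγ1 : γ < 1)
    (L : S → S) (K : A → A) (hL : Function.Bijective L) (hK : Function.Bijective K)
    (hR : ∀ s a, R s a = R (L s) (K a))
    (hT : ∀ s a s', T s a s' = T (L s) (K a) (L s'))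
    (π πg : S → A → ℝ)
    (hπg : ∀ s a, πg (L s) (K a) = π s a)
    (Vπ : S → ℝ) (hVπ : IsPolicyValue R T γ π Vπ)
    (Vg : S → ℝ) (hVg : IsPolicyValue R T γ πg Vg)
    (hunique : ∀ W W' : S → ℝ, IsPolicyValue R T γ πg W →
      IsPolicyValue R T γ πg W' → W = W') :
    ∀ s, Vg (L s) = Vπ s := by
  let eL : S ≃ S := Equiv.ofBijective L hL
  let eK : A ≃ A := Equiv.ofBijective K hK
  have hval : IsPolicyValue R T γ πg (fun s => Vπ (eL.symm s)) := by
    intro s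
    have hs : s = L (eL.symm s) := (eL.apply_symm_apply s).symm
    rw [hs]
    set s₀ := eL.symm s with hs₀
    have heLs : eL s₀ = L s₀ := rfl
    show Vπ (eL.symm (L s₀)) = _
    rw [← heLs, eL.symm_apply_apply, hVπ s₀]
    simp only [heLs]
    rw [← Equiv.sum_comp eK (fun a => πg (L s₀) a * (R (L s₀) a + γ * ∑ s', T (L s₀) a s' * Vπ (eL.symm s')))]
    refine Finset.sum_congr rfl fun a _ => ?_
    have heK : eK a = K a := rfl
    have hinner : ∑ s', T (L s₀) (K a) s' * Vπ (eL.symm s') = ∑ s', T s₀ a s' * Vπ s' := by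
      rw [← Equiv.sum_comp eL (fun s' => T (L s₀) (K a) s' * Vπ (eL.symm s'))]
      refine Finset.sum_congr rfl fun s' _ => ?_
      show T (L s₀) (K a) (L s') * Vπ (eL.symm (eL s')) = _
      rw [← hT, eL.symm_apply_apply]
    rw [heK, hπg, ← hR, hinner]
  have := hunique Vg (fun s => Vπ (eL.symm s)) hVg hval
  intro s
  rw [this]
  simp [eL]
end

section
/- In a finite Symmetry Markov game, the optimal state-action value function is invariant under the group action: Q*(s, a) = Q*(L_g[s], K_g[a]) for all g ∈ G and all admissible state-action pairs (s, a). -/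
open Finset

/-- `Q` is a fixed point of the Bellman optimality operator. -/
def IsBellmanFixed {S A : Type*} [Fintype S] [Fintype A] [Nonempty A]
    (R : S → A → ℝ) (T : S → A → S → ℝ) (γ : ℝ) (Q : S → A → ℝ) : Prop :=
  ∀ s a, Q s a = R s a + γ * ∑ s', T s a s' *
    (Finset.univ.sup' Finset.univ_nonempty fun a' => Q s' a')

theorem Function.Surjective.univ_sup'_comp {ι κ α : Type*} [Fintype ι] [Nonempty ι]
    [Fintype κ] [Nonempty κ] [ConditionallyCompleteLattice α] {K : ι → κ}
    (hK : Function.Surjective K) (f : κ → α) :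
    univ.sup' univ_nonempty (fun i => f (K i)) = univ.sup' univ_nonempty f := by
  rw [sup'_univ_eq_ciSup, sup'_univ_eq_ciSup, hK.iSup_comp f]

theorem IsBellmanFixed.comp_symmetry {S A : Type*} [Fintype S] [Fintype A] [Nonempty A]
    {R : S → A → ℝ} {T : S → A → S → ℝ} {γ : ℝ} {L : S → S} {K : A → A}
    (hL : Function.Bijective L) (hK : Function.Surjective K)
    (hR : ∀ s a, R s a = R (L s) (K a)) (hT : ∀ s a s', T s a s' = T (L s) (K a) (L s'))
    {Q : S → A → ℝ} (hQ : IsBellmanFixed R T γ Q) :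
    IsBellmanFixed R T γ (fun s a => Q (L s) (K a)) := by
  intro s a
  show Q (L s) (K a) = _
  have hsum : ∑ s', T s a s' * univ.sup' univ_nonempty (fun a' => Q (L s') (K a')) =
      ∑ s', T (L s) (K a) s' * univ.sup' univ_nonempty (fun a' => Q s' a') := by
    simp only [hT s a, hK.univ_sup'_comp]
    exact hL.sum_comp fun s' => T (L s) (K a) s' * univ.sup' univ_nonempty (Q s')
  rw [hQ (L s) (K a), ← hR, ← hsum]

theorem optimal_Q_invariant_general {S A : Type*} [Fintype S] [Fintype A] [Nonempty A]
    (R : S → A → ℝ) (T : S → A → S → ℝ) (γ : ℝ)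
    (L : S → S) (K : A → A) (hL : Function.Bijective L) (hK : Function.Bijective K)
    (hR : ∀ s a, R s a = R (L s) (K a))
    (hT : ∀ s a s', T s a s' = T (L s) (K a) (L s'))
    (Qstar : S → A → ℝ) (hQ : IsBellmanFixed R T γ Qstar)
    (hunique : ∀ Q' : S → A → ℝ, IsBellmanFixed R T γ Q' → Q' = Qstar) :
    ∀ s a, Qstar s a = Qstar (L s) (K a) := by
  intro s a
  have hfixed := hunique _ (hQ.comp_symmetry hL hK.surjective hR hT)
  exact (congrFun₂ hfixed s a).symm

theorem optimal_Q_invariant {S A : Type*} [Fintype S] [Fintype A] [Nonempty A]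
    (R : S → A → ℝ) (T : S → A → S → ℝ) (γ : ℝ) (hγ : 0 ≤ γ) (hγ1 : γ < 1)
    (L : S → S) (K : A → A) (hL : Function.Bijective L) (hK : Function.Bijective K)
    (hR : ∀ s a, R s a = R (L s) (K a))
    (hT : ∀ s a s', T s a s' = T (L s) (K a) (L s'))
    (Qstar : S → A → ℝ) (hQ : IsBellmanFixed R T γ Qstar)
    (hunique : ∀ Q' : S → A → ℝ, IsBellmanFixed R T γ Q' → Q' = Qstar) :
    ∀ s a, Qstar s a = Qstar (L s) (K a) :=
  optimal_Q_invariant_general R T γ L K hL hK hR hT Qstar hQ hunique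
end

section
/- In a finite Symmetry Markov game, the optimal state value function is invariant under the state transformation: V*(s) = V*(L_g[s]) for all g ∈ G and s ∈ S. -/
open Finset

lemma sup'_comp_bij {α : Type*} [Fintype α] [Nonempty α]
    (f : α → α) (hf : Function.Bijective f) (g : α → ℝ) :
    (Finset.univ.sup' Finset.univ_nonempty fun a => g (f a)) =
      Finset.univ.sup' Finset.univ_nonempty g := by
  apply le_antisymm
  · exact Finset.sup'_le _ _ fun a _ => Finset.le_sup' g (Finset.mem_univ (f a))
  · apply Finset.sup'_le
    intro a _
    obtain ⟨b, hb⟩ := hf.2 a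
    calc g a = g (f b) := by rw [hb]
      _ ≤ _ := Finset.le_sup' (fun a => g (f a)) (Finset.mem_univ b)

theorem optimal_V_invariant {S A : Type*} [Fintype S] [Fintype A] [Nonempty A]
    (R : S → A → ℝ) (T : S → A → S → ℝ) (γ : ℝ) (hγ : 0 ≤ γ) (hγ1 : γ < 1)
    (L : S → S) (K : A → A) (hL : Function.Bijective L) (hK : Function.Bijective K)
    (hR : ∀ s a, R s a = R (L s) (K a))
    (hT : ∀ s a s', T s a s' = T (L s) (K a) (L s'))
    (Qstar : S → A → ℝ) (hQ : IsBellmanFixed R T γ Qstar)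
    (hunique : ∀ Q' : S → A → ℝ, IsBellmanFixed R T γ Q' → Q' = Qstar)
    (Vstar : S → ℝ)
    (hV : ∀ s, Vstar s = Finset.univ.sup' Finset.univ_nonempty fun a => Qstar s a) :
    ∀ s, Vstar s = Vstar (L s) := by
  have key : (fun s a => Qstar (L s) (K a)) = Qstar := by
    apply hunique
    intro s a
    have hsum : ∑ s', T (L s) (K a) s' *
        (Finset.univ.sup' Finset.univ_nonempty fun a' => Qstar s' a') =
        ∑ s', T s a s' *
        (Finset.univ.sup' Finset.univ_nonempty fun a' => Qstar (L s') (K a')) := by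
      rw [← Function.Bijective.sum_comp hL
        (fun s' => T (L s) (K a) s' *
          (Finset.univ.sup' Finset.univ_nonempty fun a' => Qstar s' a'))]
      refine Finset.sum_congr rfl fun s' _ => ?_
      rw [← hT, sup'_comp_bij K hK]
    simpa [← hR s a, hsum] using hQ (L s) (K a)
  intro s
  rw [hV, hV (L s)]
  calc (Finset.univ.sup' Finset.univ_nonempty fun a => Qstar s a)
      = Finset.univ.sup' Finset.univ_nonempty fun a => Qstar (L s) (K a) :=
        Finset.sup'_congr _ rfl fun a _ => (congrFun (congrFun key s) a).symm
    _ = _ := sup'_comp_bij K hK _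
end

section
/- The Bellman optimality operator of a finite Symmetry Markov game commutes with the group transformation: if Q is any bounded function on S × A and (𝒯Q)(s,a) = R(s,a) + γ Σ_{s'} T(s,a,s') max_{a'} Q(s',a'), then defining (g·Q)(s,a) = Q(L_g s, K_g a), we have 𝒯(g·Q) = g·(𝒯Q). -/
open Finset

/-- The Bellman optimality operator. -/
noncomputable def bellman {S A : Type*} [Fintype S] [Fintype A] [Nonempty A]
    (R : S → A → ℝ) (T : S → A → S → ℝ) (γ : ℝ) (Q : S → A → ℝ) : S → A → ℝ :=
  fun s a => R s a + γ * ∑ s', T s a s' *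
    (Finset.univ.sup' Finset.univ_nonempty fun a' => Q s' a')

theorem bellman_commutes {S A : Type*} [Fintype S] [Fintype A] [Nonempty A]
    (R : S → A → ℝ) (T : S → A → S → ℝ) (γ : ℝ)
    (L : S → S) (K : A → A) (hL : Function.Bijective L) (hK : Function.Bijective K)
    (hR : ∀ s a, R s a = R (L s) (K a))
    (hT : ∀ s a s', T s a s' = T (L s) (K a) (L s')) :
    ∀ Q : S → A → ℝ,
      bellman R T γ (fun s a => Q (L s) (K a)) =
        fun s a => bellman R T γ Q (L s) (K a) := by
  intro Q
  funext s a
  unfold bellman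
  have hsup : ∀ s' : S,
      (Finset.univ.sup' Finset.univ_nonempty fun a' => Q (L s') (K a')) =
        Finset.univ.sup' Finset.univ_nonempty fun a' => Q (L s') a' := by
    intro s'
    classical
    rw [show (fun a' => Q (L s') (K a')) = (fun a' => Q (L s') a') ∘ K from rfl,
      Finset.sup'_comp_eq_image Finset.univ_nonempty]
    exact Finset.sup'_congr _ (Finset.image_univ_of_surjective hK.surjective)
      (fun _ _ => rfl)
  have hsum : (∑ s', T s a s' *
      (Finset.univ.sup' Finset.univ_nonempty fun a' => Q (L s') a')) =
      ∑ s', T (L s) (K a) s' *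
      (Finset.univ.sup' Finset.univ_nonempty fun a' => Q s' a') := by
    rw [← Function.Bijective.sum_comp hL
      (fun s' => T (L s) (K a) s' * Finset.univ.sup' Finset.univ_nonempty fun a' => Q s' a')]
    exact Finset.sum_congr rfl fun s' _ => by rw [← hT]
  simp only [hsup, hsum, ← hR]
end

section
/- In a Symmetry Markov game, if π* is an optimal policy (deterministic, achieving max_a Q*(s,a) at each state), then the transformed policy defined by π*_g(L_g s) = K_g(π*(s)) is also optimal. -/
open Finset

theorem transformed_policy_optimal {S A : Type*} [Fintype S] [Fintype A] [Nonempty A]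
    (Qstar : S → A → ℝ)
    (L : S → S) (K : A → A) (hL : Function.Bijective L) (hK : Function.Bijective K)
    (hQinv : ∀ s a, Qstar s a = Qstar (L s) (K a))
    (π : S → A)
    (hopt : ∀ s, Qstar s (π s) = Finset.univ.sup' Finset.univ_nonempty fun a => Qstar s a)
    (πg : S → A) (hπg : ∀ s, πg (L s) = K (π s)) :
    ∀ s, Qstar s (πg s) = Finset.univ.sup' Finset.univ_nonempty fun a => Qstar s a := by
  intro s
  obtain ⟨s', rfl⟩ := hL.surjective s
  have hsup : (Finset.univ.sup' Finset.univ_nonempty fun a => Qstar (L s') a)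
      = Finset.univ.sup' Finset.univ_nonempty fun a => Qstar s' a := by
    apply le_antisymm
    · apply Finset.sup'_le
      intro a _
      obtain ⟨b, rfl⟩ := hK.surjective a
      rw [← hQinv]
      exact Finset.le_sup' _ (Finset.mem_univ b)
    · apply Finset.sup'_le
      intro a _
      rw [hQinv s' a]
      exact Finset.le_sup' _ (Finset.mem_univ (K a))
  rw [hπg, ← hQinv, hopt, hsup]
end
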